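/- arXiv:math/0304227 — 6 statements merged into one kernel-verified Lean document; each statement's English description precedes it below -/
import Mathlib

section
/- If λ ∈ ℝ then the values j_m(r,λ) and j_m'(r,λ) are real for all r > 0; moreover if λ ≤ 0 then j_m(r,λ) ≥ r^{|m|+1/2} and j_m'(r,λ) > 0 for all r > 0. -/
/-!
Write `μ = |m| + 1/2` and `φ(r) = r ^ μ`, which solves `φ'' = (μ² - μ) φ / r²`. For real `λ` the
equation of `j_m(·, λ)` has real coefficients, so its real and imaginary parts `w` both solve
`w'' = (c + (μ² - μ) / r²) w` with `c = q - λ`, with `w ~ φ` for the real part and `w = o(φ)` for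
the imaginary part. The Wronskian `W = w' φ - w φ'` satisfies `W' = c w φ`, `W(0+) = 0` and
`(w / φ)' = W / φ²`.

If `λ ≤ 0` then `c ≥ 0`, so `W ≥ 0` as long as `w > 0`; hence `w / φ` increases from `1`, `w`
never vanishes, `w ≥ φ` and `w' φ = W + w φ' > 0`.

If `|w| ≤ B φ` on `(0, R]`, the two identities give `|w| ≤ Q B R² φ / (2 (2μ + 1))` there, where
`|c| ≤ Q`; for small `R` iterating forces `w = 0` near `0`, and Gronwall's inequality carries this
to all `r > 0`, where the equation is regular.
-/

open Filter Set Topology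

section ContDiffOn

variable {E : Type*} [NormedAddCommGroup E] [NormedSpace ℝ E] {f : ℝ → E} {s : Set ℝ}
  {x : ℝ} {n : WithTop ℕ∞}

theorem ContDiffOn.hasDerivAt_of_isOpen (hf : ContDiffOn ℝ n f s) (hn : n ≠ 0) (hs : IsOpen s)
    (hx : x ∈ s) : HasDerivAt f (deriv f x) x :=
  ((hf.differentiableOn hn).differentiableAt (hs.mem_nhds hx)).hasDerivAt

theorem ContDiffOn.hasDerivAt_deriv_of_isOpen (hf : ContDiffOn ℝ n f s) (hn : 2 ≤ n)
    (hs : IsOpen s) (hx : x ∈ s) : HasDerivAt (deriv f) (deriv (deriv f) x) x :=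
  (hf.deriv_of_isOpen hs (m := 1) (le_trans (by norm_num) hn)).hasDerivAt_of_isOpen
    one_ne_zero hs hx

end ContDiffOn

theorem deriv_eq_zero_of_forall_mem_nhds {f : ℝ → ℝ} {s : Set ℝ} {x : ℝ} (hs : s ∈ 𝓝 x)
    (hf : ∀ y ∈ s, f y = 0) : deriv f x = 0 := by
  simp [(eventuallyEq_of_mem hs (g := fun _ => 0) hf).deriv_eq]

theorem tendsto_rpow_nhdsGT_zero {p : ℝ} (hp : 0 < p) :
    Tendsto (fun r : ℝ => r ^ p) (𝓝[>] 0) (𝓝 0) := by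
  simpa [Real.zero_rpow hp.ne'] using
    (Real.continuousAt_rpow_const 0 p (Or.inr hp.le)).tendsto.mono_left nhdsWithin_le_nhds

theorem le_of_tendsto_nhdsGT_zero_of_deriv_nonneg {f f' : ℝ → ℝ} {A t : ℝ} (ht : 0 < t)
    (hf : ∀ s ∈ Ioc 0 t, HasDerivAt f (f' s) s) (hf' : ∀ s ∈ Ioo 0 t, 0 ≤ f' s)
    (hA : Tendsto f (𝓝[>] 0) (𝓝 A)) : A ≤ f t := by
  refine le_of_tendsto hA ?_
  filter_upwards [Ioo_mem_nhdsGT ht] with ε hε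
  have hmono : MonotoneOn f (Icc ε t) := by
    refine monotoneOn_of_hasDerivWithinAt_nonneg (convex_Icc ε t) (f' := f') ?_ ?_ ?_
    · exact fun s hs => (hf s ⟨hε.1.trans_le hs.1, hs.2⟩).continuousAt.continuousWithinAt
    · rw [interior_Icc]
      exact fun s hs => (hf s ⟨hε.1.trans hs.1, hs.2.le⟩).hasDerivWithinAt
    · rw [interior_Icc]
      exact fun s hs => hf' s ⟨hε.1.trans hs.1, hs.2⟩
  exact hmono (left_mem_Icc.2 hε.2.le) (right_mem_Icc.2 hε.2.le) hε.2.le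

theorem abs_le_of_tendsto_nhdsGT_zero_of_abs_deriv_le {f f' g g' : ℝ → ℝ} {t : ℝ}
    (ht : 0 < t)
    (hf : ∀ s ∈ Ioc 0 t, HasDerivAt f (f' s) s) (hg : ∀ s ∈ Ioc 0 t, HasDerivAt g (g' s) s)
    (hfg : ∀ s ∈ Ioo 0 t, |f' s| ≤ g' s) (hf0 : Tendsto f (𝓝[>] 0) (𝓝 0))
    (hg0 : Tendsto g (𝓝[>] 0) (𝓝 0)) : |f t| ≤ g t := by
  have hsub : 0 ≤ g t - f t := le_of_tendsto_nhdsGT_zero_of_deriv_nonneg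
    (f := fun s => g s - f s) ht
    (fun s hs => (hg s hs).sub (hf s hs))
    (fun s hs => by linarith [le_abs_self (f' s), hfg s hs]) (by simpa using hg0.sub hf0)
  have hadd : 0 ≤ g t + f t := le_of_tendsto_nhdsGT_zero_of_deriv_nonneg
    (f := fun s => g s + f s) ht
    (fun s hs => (hg s hs).add (hf s hs))
    (fun s hs => by linarith [neg_abs_le (f' s), hfg s hs]) (by simpa using hg0.add hf0)
  exact abs_le.2 ⟨by linarith, by linarith⟩

theorem eqOn_zero_of_hasDerivAt_of_abs_le {w w' p : ℝ → ℝ} {K a b : ℝ}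
    (hw : ∀ x ∈ Icc a b, HasDerivAt w (w' x) x)
    (hw' : ∀ x ∈ Icc a b, HasDerivAt w' (p x * w x) x)
    (hp : ∀ x ∈ Icc a b, |p x| ≤ K) (ha : w a = 0) (ha' : w' a = 0) :
    ∀ x ∈ Icc a b, w x = 0 := by
  have hf : ∀ x ∈ Icc a b, HasDerivAt (fun x => (w x, w' x)) (w' x, p x * w x) x :=
    fun x hx => (hw x hx).prodMk (hw' x hx)
  have hK : 0 ≤ max 1 K := zero_le_one.trans (le_max_left _ _)
  have hzero := eq_zero_of_abs_deriv_le_mul_abs_self_of_eq_zero_right (K := max 1 K)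
    (fun x hx => (hf x hx).continuousAt.continuousWithinAt)
    (fun x hx => (hf x (Ico_subset_Icc_self hx)).hasDerivWithinAt) (by simp [ha, ha']) ?_
  · exact fun x hx => congrArg Prod.fst (hzero x hx)
  intro x hx
  simp only [Prod.norm_def, Real.norm_eq_abs, abs_mul]
  refine max_le ?_ ?_
  · exact (le_max_right _ _).trans (le_mul_of_one_le_left (by positivity) (le_max_left _ _))
  · exact mul_le_mul ((hp x (Ico_subset_Icc_self hx)).trans (le_max_right _ _))
      (le_max_left _ _) (abs_nonneg _) hK

noncomputable def rpowWronskian (μ : ℝ) (w : ℝ → ℝ) (r : ℝ) : ℝ :=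
  deriv w r * r ^ μ - w r * (μ * r ^ (μ - 1))

structure IsRegularSolution (μ : ℝ) (c w : ℝ → ℝ) (A : ℝ) : Prop where
  contDiffOn : ContDiffOn ℝ 2 w (Ioi 0)
  deriv_deriv : ∀ r ∈ Ioi (0 : ℝ), deriv (deriv w) r = (c r + (μ ^ 2 - μ) / r ^ 2) * w r
  tendsto_div : Tendsto (fun r => w r / r ^ μ) (𝓝[>] 0) (𝓝 A)
  tendsto_deriv_div : Tendsto (fun r => deriv w r / (μ * r ^ (μ - 1))) (𝓝[>] 0) (𝓝 A)

section RadialEquation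

variable {μ A : ℝ} {c w : ℝ → ℝ} {s : ℝ}

theorem hasDerivAt_div_rpow (hw : ContDiffOn ℝ 2 w (Ioi 0)) (hs : 0 < s) :
    HasDerivAt (fun t => w t / t ^ μ) (rpowWronskian μ w s / s ^ (2 * μ)) s := by
  refine ((hw.hasDerivAt_of_isOpen two_ne_zero isOpen_Ioi hs).div
    (Real.hasDerivAt_rpow_const (p := μ) (Or.inl hs.ne')) (by positivity)).congr_deriv ?_
  rw [rpowWronskian, two_mul, Real.rpow_add hs, sq]

theorem hasDerivAt_rpowWronskian (hw : ContDiffOn ℝ 2 w (Ioi 0))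
    (hode : ∀ r ∈ Ioi (0 : ℝ), deriv (deriv w) r = (c r + (μ ^ 2 - μ) / r ^ 2) * w r)
    (hs : 0 < s) : HasDerivAt (rpowWronskian μ w) (c s * w s * s ^ μ) s := by
  have hφ := Real.hasDerivAt_rpow_const (p := μ) (Or.inl hs.ne')
  have hφ' := (Real.hasDerivAt_rpow_const (p := μ - 1) (Or.inl hs.ne')).const_mul μ
  refine (((hw.hasDerivAt_deriv_of_isOpen le_rfl isOpen_Ioi hs).mul hφ).sub
    ((hw.hasDerivAt_of_isOpen two_ne_zero isOpen_Ioi hs).mul hφ')).congr_deriv ?_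
  have hpow : s ^ (μ - 1 - 1) = s ^ μ / s ^ 2 := by
    rw [sub_sub, Real.rpow_sub hs]
    norm_num
  rw [hode s hs, hpow]
  field_simp
  ring

theorem tendsto_rpowWronskian_nhdsGT_zero (hμ : 1 / 2 ≤ μ)
    (h0 : Tendsto (fun r => w r / r ^ μ) (𝓝[>] 0) (𝓝 A))
    (h0' : Tendsto (fun r => deriv w r / (μ * r ^ (μ - 1))) (𝓝[>] 0) (𝓝 A)) :
    Tendsto (rpowWronskian μ w) (𝓝[>] 0) (𝓝 0) := by
  have hμ0 : 0 < μ := by linarith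
  -- `W = (w' / φ' - w / φ) · φ φ'`, and `φ φ' = μ r ^ (2μ - 1)` stays bounded as `r → 0`.
  have hbdd : IsBoundedUnder (· ≤ ·) (𝓝[>] 0) fun r : ℝ => ‖μ * r ^ (2 * μ - 1)‖ := by
    refine isBoundedUnder_of_eventually_le (a := μ) ?_
    filter_upwards [Ioo_mem_nhdsGT one_pos] with r hr
    rw [Real.norm_of_nonneg (by have := hr.1; positivity)]
    exact mul_le_of_le_one_right hμ0.le (Real.rpow_le_one hr.1.le hr.2.le (by linarith))
  refine (Tendsto.zero_mul_isBoundedUnder_le (by simpa using h0'.sub h0) hbdd).congr' ?_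
  filter_upwards [self_mem_nhdsWithin] with r (hr : 0 < r)
  rw [rpowWronskian, show 2 * μ - 1 = μ + (μ - 1) by ring, Real.rpow_add hr]
  field_simp

end RadialEquation

namespace IsRegularSolution

variable {μ Q A : ℝ} {c w : ℝ → ℝ} {t : ℝ}

theorem rpowWronskian_nonneg (hw : IsRegularSolution μ c w A) (hμ : 1 / 2 ≤ μ)
    (hc : ∀ s ∈ Ioi (0 : ℝ), 0 ≤ c s) (ht : 0 < t) (hpos : ∀ s ∈ Ioo 0 t, 0 < w s) :
    0 ≤ rpowWronskian μ w t :=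
  le_of_tendsto_nhdsGT_zero_of_deriv_nonneg ht
    (fun s hs => hasDerivAt_rpowWronskian hw.contDiffOn hw.deriv_deriv hs.1)
    (fun s hs => by have := hs.1; have := hc s hs.1; have := hpos s hs; positivity)
    (tendsto_rpowWronskian_nhdsGT_zero hμ hw.tendsto_div hw.tendsto_deriv_div)

theorem rpow_le_of_forall_pos (hw : IsRegularSolution μ c w 1) (hμ : 1 / 2 ≤ μ)
    (hc : ∀ s ∈ Ioi (0 : ℝ), 0 ≤ c s) (ht : 0 < t) (hpos : ∀ s ∈ Ioo 0 t, 0 < w s) :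
    t ^ μ ≤ w t := by
  have hdiv : 1 ≤ w t / t ^ μ :=
    le_of_tendsto_nhdsGT_zero_of_deriv_nonneg (f := fun s => w s / s ^ μ) ht
      (fun s hs => hasDerivAt_div_rpow hw.contDiffOn hs.1)
      (fun s hs => div_nonneg (hw.rpowWronskian_nonneg hμ hc hs.1
        fun x hx => hpos x ⟨hx.1, hx.2.trans hs.2⟩) (by have := hs.1; positivity))
      hw.tendsto_div
  rwa [one_le_div (by positivity)] at hdiv

theorem pos (hw : IsRegularSolution μ c w 1) (hμ : 1 / 2 ≤ μ)
    (hc : ∀ s ∈ Ioi (0 : ℝ), 0 ≤ c s) : ∀ t ∈ Ioi (0 : ℝ), 0 < w t := by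
  obtain ⟨δ, hδ, hδpos⟩ : ∃ δ > 0, ∀ s ∈ Ioo 0 δ, 0 < w s := by
    obtain ⟨δ, hδ, h⟩ := mem_nhdsGT_iff_exists_Ioo_subset.1
      (hw.tendsto_div.eventually (eventually_gt_nhds one_pos))
    exact ⟨δ, hδ, fun s hs =>
      (div_pos_iff_of_pos_right (by have := hs.1; positivity)).1 (h hs)⟩
  by_contra! hneg
  -- `sInf T` would be the first zero of `w`, but `w > 0` before it forces `w ≥ r ^ μ > 0` there.
  set T := Ici δ ∩ w ⁻¹' Iic 0
  have hT : IsClosed T := (hw.contDiffOn.continuousOn.mono (Ici_subset_Ioi.2 hδ))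
    |>.preimage_isClosed_of_isClosed isClosed_Ici isClosed_Iic
  have hTne : T.Nonempty := by
    obtain ⟨t, ht, hwt⟩ := hneg
    exact ⟨t, not_lt.1 fun htδ => (hδpos t ⟨ht, htδ⟩).not_ge hwt, hwt⟩
  have hTbdd : BddBelow T := ⟨δ, fun x hx => hx.1⟩
  obtain ⟨hδt₀, hwt₀⟩ := hT.csInf_mem hTne hTbdd
  have hpos : ∀ s ∈ Ioo 0 (sInf T), 0 < w s := fun s hs => by
    by_cases hsδ : s < δ
    · exact hδpos s ⟨hs.1, hsδ⟩
    · exact not_le.1 fun hws => (csInf_le hTbdd ⟨not_lt.1 hsδ, hws⟩).not_gt hs.2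
  have ht₀ : 0 < sInf T := hδ.trans_le hδt₀
  have := hw.rpow_le_of_forall_pos hμ hc ht₀ hpos
  have : 0 < sInf T ^ μ := by positivity
  simp only [mem_preimage, mem_Iic] at hwt₀
  linarith

theorem rpow_le_and_deriv_pos (hw : IsRegularSolution μ c w 1) (hμ : 1 / 2 ≤ μ)
    (hc : ∀ s ∈ Ioi (0 : ℝ), 0 ≤ c s) {r : ℝ} (hr : 0 < r) :
    r ^ μ ≤ w r ∧ 0 < deriv w r := by
  have hpos : ∀ s ∈ Ioo 0 r, 0 < w s := fun s hs => hw.pos hμ hc s hs.1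
  refine ⟨hw.rpow_le_of_forall_pos hμ hc hr hpos, ?_⟩
  have hW := hw.rpowWronskian_nonneg hμ hc hr hpos
  have hwr := hw.pos hμ hc r hr
  have hφ' : 0 < μ * r ^ (μ - 1) := mul_pos (by linarith) (by positivity)
  rw [rpowWronskian] at hW
  exact pos_of_mul_pos_left (by nlinarith : 0 < deriv w r * r ^ μ) (by positivity)

theorem abs_le_of_abs_le_mul_rpow (hw : IsRegularSolution μ c w 0) (hμ : 1 / 2 ≤ μ)
    (hQ : ∀ s ∈ Ioi (0 : ℝ), |c s| ≤ Q) {B R : ℝ}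
    (hB : ∀ s ∈ Ioc 0 R, |w s| ≤ B * s ^ μ) :
    ∀ t ∈ Ioc 0 R, |w t| ≤ Q * B * t ^ 2 / (2 * (2 * μ + 1)) * t ^ μ := by
  have hμ1 : 0 < 2 * μ + 1 := by linarith
  have hW : ∀ t ∈ Ioc 0 R,
      |rpowWronskian μ w t| ≤ Q * B * (t ^ (2 * μ + 1) / (2 * μ + 1)) := by
    refine fun t ht => abs_le_of_tendsto_nhdsGT_zero_of_abs_deriv_le ht.1
      (fun s hs => hasDerivAt_rpowWronskian hw.contDiffOn hw.deriv_deriv hs.1)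
      (g := fun s => Q * B * (s ^ (2 * μ + 1) / (2 * μ + 1)))
      (g' := fun s => Q * B * s ^ (2 * μ)) (fun s hs => ?_) (fun s hs => ?_)
      (tendsto_rpowWronskian_nhdsGT_zero hμ hw.tendsto_div hw.tendsto_deriv_div) ?_
    · refine (((Real.hasDerivAt_rpow_const (p := 2 * μ + 1) (Or.inl hs.1.ne')).div_const
        (2 * μ + 1)).const_mul (Q * B)).congr_deriv ?_
      field_simp
      ring_nf
    · have hs0 := hs.1
      have hwB := hB s ⟨hs0, hs.2.le.trans ht.2⟩
      have hQ0 := (abs_nonneg _).trans (hQ s hs0)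
      rw [abs_mul, abs_mul, abs_of_pos (by positivity : 0 < s ^ μ), two_mul,
        Real.rpow_add hs0]
      calc |c s| * |w s| * s ^ μ ≤ Q * (B * s ^ μ) * s ^ μ := by gcongr; exact hQ s hs0
        _ = Q * B * (s ^ μ * s ^ μ) := by ring
    · simpa using ((tendsto_rpow_nhdsGT_zero hμ1).div_const (2 * μ + 1)).const_mul (Q * B)
  intro t ht
  have hdiv : |w t / t ^ μ| ≤ Q * B * t ^ 2 / (2 * (2 * μ + 1)) := by
    refine abs_le_of_tendsto_nhdsGT_zero_of_abs_deriv_le ht.1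
      (fun s hs => hasDerivAt_div_rpow hw.contDiffOn hs.1)
      (g := fun s => Q * B * s ^ 2 / (2 * (2 * μ + 1)))
      (g' := fun s => Q * B * s / (2 * μ + 1))
      (fun s _ => ?_) (fun s hs => ?_) hw.tendsto_div ?_
    · refine (((hasDerivAt_pow 2 s).const_mul (Q * B)).div_const _).congr_deriv ?_
      field_simp
      ring
    · have hs0 := hs.1
      rw [abs_div, abs_of_pos (by positivity : 0 < s ^ (2 * μ)), div_le_iff₀ (by positivity)]
      calc |rpowWronskian μ w s| ≤ Q * B * (s ^ (2 * μ + 1) / (2 * μ + 1)) :=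
            hW s ⟨hs0, hs.2.le.trans ht.2⟩
        _ = Q * B * s / (2 * μ + 1) * s ^ (2 * μ) := by
            rw [Real.rpow_add_one hs0.ne']
            ring
    · have : Continuous fun s : ℝ => Q * B * s ^ 2 / (2 * (2 * μ + 1)) := by fun_prop
      simpa using this.continuousWithinAt (s := Ioi 0) (x := 0) |>.tendsto
  have hφ : 0 < t ^ μ := by have := ht.1; positivity
  rwa [abs_div, abs_of_pos hφ, div_le_iff₀ hφ] at hdiv

theorem exists_eqOn_zero_Ioc (hw : IsRegularSolution μ c w 0) (hμ : 1 / 2 ≤ μ)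
    (hQ : ∀ s ∈ Ioi (0 : ℝ), |c s| ≤ Q) : ∃ R > 0, ∀ t ∈ Ioc 0 R, w t = 0 := by
  have hQ0 : 0 ≤ Q := (abs_nonneg _).trans (hQ 1 (mem_Ioi.2 one_pos))
  obtain ⟨δ, hδ, hδw⟩ := mem_nhdsGT_iff_exists_Ioo_subset.1
    (hw.tendsto_div.abs.eventually (eventually_lt_nhds (by simp : |(0 : ℝ)| < 1)))
  have hsmall : Tendsto (fun R : ℝ => Q * R ^ 2 / (2 * (2 * μ + 1))) (𝓝[>] 0) (𝓝 0) := by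
    have : Continuous fun R : ℝ => Q * R ^ 2 / (2 * (2 * μ + 1)) := by fun_prop
    simpa using this.continuousWithinAt (s := Ioi 0) (x := 0) |>.tendsto
  obtain ⟨R, ⟨hR, hRδ⟩, hRQ⟩ := (Eventually.and (Ioo_mem_nhdsGT (mem_Ioi.1 hδ))
    (hsmall.eventually (eventually_le_nhds (by norm_num : (0 : ℝ) < 1 / 2)))).exists
  -- Iterating the bound halves the constant `B` in `|w| ≤ B r ^ μ` on `(0, R]`.
  have hhalf : ∀ n : ℕ, ∀ t ∈ Ioc 0 R, |w t| ≤ (1 / 2) ^ n * t ^ μ := by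
    intro n
    induction n with
    | zero =>
      intro t ht
      have hφ : 0 < t ^ μ := by have := ht.1; positivity
      have := hδw ⟨ht.1, ht.2.trans_lt hRδ⟩
      simp only [mem_ofPred_eq, abs_div, abs_of_pos hφ, div_lt_one hφ] at this
      simpa using this.le
    | succ n ih =>
      intro t ht
      refine (hw.abs_le_of_abs_le_mul_rpow hμ hQ ih t ht).trans ?_
      have ht' : Q * t ^ 2 / (2 * (2 * μ + 1)) ≤ 1 / 2 := by
        refine le_trans ?_ hRQ
        have := ht.1
        gcongr
        exact ht.2
      have hφ : 0 < t ^ μ := by have := ht.1; positivity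
      calc Q * (1 / 2) ^ n * t ^ 2 / (2 * (2 * μ + 1)) * t ^ μ
          = Q * t ^ 2 / (2 * (2 * μ + 1)) * (1 / 2) ^ n * t ^ μ := by ring
        _ ≤ 1 / 2 * (1 / 2) ^ n * t ^ μ := by gcongr
        _ = (1 / 2) ^ (n + 1) * t ^ μ := by ring
  refine ⟨R, hR, fun t ht => abs_nonpos_iff.1 (ge_of_tendsto (x := atTop) ?_
    (Eventually.of_forall (hhalf · t ht)))⟩
  simpa using (tendsto_pow_atTop_nhds_zero_of_lt_one (by norm_num : (0 : ℝ) ≤ 1 / 2)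
    (by norm_num)).mul_const (t ^ μ)

theorem eq_zero_and_deriv_eq_zero (hw : IsRegularSolution μ c w 0) (hμ : 1 / 2 ≤ μ)
    (hQ : ∀ s ∈ Ioi (0 : ℝ), |c s| ≤ Q) {r : ℝ} (hr : 0 < r) :
    w r = 0 ∧ deriv w r = 0 := by
  obtain ⟨R, hR, hzero⟩ := hw.exists_eqOn_zero_Ioc hμ hQ
  -- Away from the singular point the equation is regular, so Gronwall propagates `w = 0`.
  have hglobal : ∀ r ∈ Ioi (0 : ℝ), w r = 0 := by
    intro r hr
    set a := min (R / 2) r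
    have ha : 0 < a := lt_min (by positivity) hr
    have haR : a < R := (min_le_left _ _).trans_lt (by linarith)
    have hsub : ∀ x ∈ Icc a r, x ∈ Ioi (0 : ℝ) := fun x hx => ha.trans_le hx.1
    refine eqOn_zero_of_hasDerivAt_of_abs_le (w' := deriv w) (K := Q + |μ ^ 2 - μ| / a ^ 2)
      (fun x hx => hw.contDiffOn.hasDerivAt_of_isOpen two_ne_zero isOpen_Ioi (hsub x hx))
      (fun x hx => hw.deriv_deriv x (hsub x hx) ▸
        hw.contDiffOn.hasDerivAt_deriv_of_isOpen le_rfl isOpen_Ioi (hsub x hx))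
      (fun x hx => ?_) (hzero a ⟨ha, haR.le⟩)
      (deriv_eq_zero_of_forall_mem_nhds (Ioo_mem_nhds ha haR) fun x hx => hzero x ⟨hx.1, hx.2.le⟩)
      r ⟨min_le_right _ _, le_rfl⟩
    have hx0 : 0 < x := hsub x hx
    calc |c x + (μ ^ 2 - μ) / x ^ 2| ≤ |c x| + |μ ^ 2 - μ| / x ^ 2 := by
          rw [← abs_of_pos (pow_pos hx0 2), ← abs_div, abs_of_pos (pow_pos hx0 2)]
          exact abs_add_le _ _
      _ ≤ Q + |μ ^ 2 - μ| / a ^ 2 := by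
          gcongr
          · exact hQ x hx0
          · exact hx.1
  exact ⟨hglobal r hr, deriv_eq_zero_of_forall_mem_nhds (Ioi_mem_nhds hr) hglobal⟩

end IsRegularSolution

section ComplexSolution

variable {E : Type*} [NormedAddCommGroup E] [NormedSpace ℝ E]

theorem deriv_clm_apply_comp (L : E →L[ℝ] ℝ) {J : ℝ → E} {r : ℝ}
    (hJ : DifferentiableAt ℝ J r) :
    deriv (fun s => L (J s)) r = L (deriv J r) :=
  (L.hasFDerivAt.comp_hasDerivAt r hJ.hasDerivAt).deriv

theorem tendsto_clm_apply_div (L : ℂ →L[ℝ] ℝ) {f : ℝ → ℂ} {g : ℝ → ℝ} {l : Filter ℝ} {z : ℂ}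
    (h : Tendsto (fun r => f r / (g r : ℂ)) l (𝓝 z)) :
    Tendsto (fun r => L (f r) / g r) l (𝓝 (L z)) := by
  refine ((L.continuous.tendsto z).comp h).congr fun r => ?_
  simp only [Function.comp_apply, div_eq_inv_mul, ← Complex.ofReal_inv, ← Complex.real_smul,
    L.map_smul, smul_eq_mul]

theorem isRegularSolution_clm_apply (L : ℂ →L[ℝ] ℝ) {μ : ℝ} {c : ℝ → ℝ} {J : ℝ → ℂ} {z : ℂ}
    (hJ : ContDiffOn ℝ 2 J (Ioi 0))
    (hode : ∀ r ∈ Ioi (0 : ℝ), deriv (deriv J) r = (c r + (μ ^ 2 - μ) / r ^ 2) • J r)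
    (h0 : Tendsto (fun r => J r / ((r ^ μ : ℝ) : ℂ)) (𝓝[>] 0) (𝓝 z))
    (h0' : Tendsto (fun r => deriv J r / ((μ * r ^ (μ - 1) : ℝ) : ℂ)) (𝓝[>] 0) (𝓝 z)) :
    IsRegularSolution μ c (fun s => L (J s)) (L z) := by
  have hderiv : ∀ r ∈ Ioi (0 : ℝ), deriv (fun s => L (J s)) r = L (deriv J r) := fun r hr =>
    deriv_clm_apply_comp L (hJ.hasDerivAt_of_isOpen two_ne_zero isOpen_Ioi hr).differentiableAt
  refine ⟨L.contDiff.comp_contDiffOn hJ, fun r hr => ?_, tendsto_clm_apply_div L h0,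
    (tendsto_clm_apply_div L h0').congr' ?_⟩
  · rw [(eventuallyEq_of_mem (Ioi_mem_nhds hr) hderiv).deriv_eq, deriv_clm_apply_comp L
      (hJ.hasDerivAt_deriv_of_isOpen le_rfl isOpen_Ioi hr).differentiableAt, hode r hr,
      L.map_smul, smul_eq_mul]
  · filter_upwards [self_mem_nhdsWithin] with r hr
    rw [hderiv r hr]

end ComplexSolution

theorem stmt6_general
    (m : ℤ) (q : ℝ → ℝ) (hq0 : ∀ r, 0 ≤ q r)
    (hqbdd : BddAbove (q '' Set.Ici 0))
    (j : ℝ → ℂ → ℂ)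
    (hjs : ∀ l : ℂ, ContDiffOn ℝ 2 (fun r => j r l) (Set.Ioi 0))
    (hode : ∀ l : ℂ, ∀ r ∈ Set.Ioi (0:ℝ),
      deriv (deriv (fun s => j s l)) r
        + (l - (q r : ℂ) - ((m:ℂ) ^ 2 - 1/4) / (r:ℂ) ^ 2) * j r l = 0)
    (hnorm : ∀ l : ℂ, Tendsto (fun r : ℝ => j r l / ((r ^ ((|m| : ℝ) + 1/2) : ℝ) : ℂ))
      (nhdsWithin 0 (Set.Ioi 0)) (nhds 1))
    (hnorm' : ∀ l : ℂ, Tendsto (fun r : ℝ => deriv (fun s => j s l) r /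
        (((((|m| : ℝ) + 1/2) * r ^ ((|m| : ℝ) - 1/2)) : ℝ) : ℂ))
      (nhdsWithin 0 (Set.Ioi 0)) (nhds 1)) :
    ∀ lam : ℝ,
      (∀ r ∈ Set.Ioi (0:ℝ),
        (j r (lam:ℂ)).im = 0 ∧ (deriv (fun s => j s (lam:ℂ)) r).im = 0) ∧
      (lam ≤ 0 → ∀ r ∈ Set.Ioi (0:ℝ),
        r ^ ((|m| : ℝ) + 1/2) ≤ (j r (lam:ℂ)).re ∧
        0 < (deriv (fun s => j s (lam:ℂ)) r).re) := by
  intro lam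
  have hμ : 1 / 2 ≤ (|m| : ℝ) + 1 / 2 := le_add_of_nonneg_left (abs_nonneg _)
  have hcoeff : ∀ r ∈ Ioi (0 : ℝ), deriv (deriv fun s => j s lam) r =
      (q r - lam + (((|m| : ℝ) + 1 / 2) ^ 2 - ((|m| : ℝ) + 1 / 2)) / r ^ 2) • j r lam := by
    intro r hr
    have hm : ((|m| : ℝ) + 1 / 2) ^ 2 - ((|m| : ℝ) + 1 / 2) = (m : ℝ) ^ 2 - 1 / 4 := by
      rw [← sq_abs (m : ℝ)]
      ring
    rw [Complex.real_smul, eq_neg_of_add_eq_zero_left (hode lam r hr), hm]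
    push_cast
    ring
  obtain ⟨M, hM⟩ := hqbdd
  have hQ : ∀ s ∈ Ioi (0 : ℝ), |q s - lam| ≤ M + |lam| := fun s hs =>
    (abs_sub _ _).trans (add_le_add_left
      ((abs_of_nonneg (hq0 s)).trans_le (hM ⟨s, mem_Ici.2 hs.le, rfl⟩)) _)
  rw [show |(m : ℝ)| - 1 / 2 = |(m : ℝ)| + 1 / 2 - 1 by ring] at hnorm'
  have hsol (L : ℂ →L[ℝ] ℝ) :=
    isRegularSolution_clm_apply L (hjs lam) hcoeff (hnorm lam) (hnorm' lam)
  have hJ (r : ℝ) (hr : r ∈ Ioi 0) : DifferentiableAt ℝ (fun s => j s lam) r :=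
    ((hjs lam).hasDerivAt_of_isOpen two_ne_zero isOpen_Ioi hr).differentiableAt
  refine ⟨fun r hr => ?_, fun hlam r hr => ?_⟩
  · have him := hsol Complex.imCLM
    simp only [Complex.imCLM_apply, Complex.one_im] at him
    obtain ⟨h1, h2⟩ := him.eq_zero_and_deriv_eq_zero hμ hQ hr
    exact ⟨h1, (deriv_clm_apply_comp Complex.imCLM (hJ r hr)).symm.trans h2⟩
  · have hre := hsol Complex.reCLM
    simp only [Complex.reCLM_apply, Complex.one_re] at hre
    obtain ⟨h1, h2⟩ := hre.rpow_le_and_deriv_pos hμ (fun s _ => by linarith [hq0 s]) hr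
    exact ⟨h1, h2.trans_eq (deriv_clm_apply_comp Complex.reCLM (hJ r hr))⟩

/-- For real `λ` the values `j_m(r,λ)` and `j_m'(r,λ)` are real; for `λ ≤ 0` one has
`j_m(r,λ) ≥ r^{|m|+1/2}` and `j_m'(r,λ) > 0` (Lemma 3.2 of the paper). -/
theorem stmt6
    (m : ℤ) (q : ℝ → ℝ) (hqm : Measurable q) (hq0 : ∀ r, 0 ≤ q r)
    (hqbdd : BddAbove (q '' Set.Ici 0))
    (j : ℝ → ℂ → ℂ)
    (hjs : ∀ l : ℂ, ContDiffOn ℝ 2 (fun r => j r l) (Set.Ioi 0))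
    (hode : ∀ l : ℂ, ∀ r ∈ Set.Ioi (0:ℝ),
      deriv (deriv (fun s => j s l)) r
        + (l - (q r : ℂ) - ((m:ℂ) ^ 2 - 1/4) / (r:ℂ) ^ 2) * j r l = 0)
    (hnorm : ∀ l : ℂ, Tendsto (fun r : ℝ => j r l / ((r ^ ((|m| : ℝ) + 1/2) : ℝ) : ℂ))
      (nhdsWithin 0 (Set.Ioi 0)) (nhds 1))
    (hnorm' : ∀ l : ℂ, Tendsto (fun r : ℝ => deriv (fun s => j s l) r /
        (((((|m| : ℝ) + 1/2) * r ^ ((|m| : ℝ) - 1/2)) : ℝ) : ℂ))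
      (nhdsWithin 0 (Set.Ioi 0)) (nhds 1)) :
    ∀ lam : ℝ,
      (∀ r ∈ Set.Ioi (0:ℝ),
        (j r (lam:ℂ)).im = 0 ∧ (deriv (fun s => j s (lam:ℂ)) r).im = 0) ∧
      (lam ≤ 0 → ∀ r ∈ Set.Ioi (0:ℝ),
        r ^ ((|m| : ℝ) + 1/2) ≤ (j r (lam:ℂ)).re ∧
        0 < (deriv (fun s => j s (lam:ℂ)) r).re) :=
  stmt6_general m q hq0 hqbdd j hjs hode hnorm hnorm'
end

section
/- For a fixed r > 0 and a bounded set Λ ⊂ [0,∞), if |m| is sufficiently large then j_m(r,λ) > 0 and j_m'(r,λ) > 0 for all λ ∈ Λ. -/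
/-!
Write `j_m'' = p j_m` with `p s = q s + (m² - 1/4)/s² - λ`. Once `m² - 1/4 ≥ (sup Λ)⁺ r²`, `p ≥ 0`
on `(0, r]`. Near `0` both `j_m` and `j_m'` are positive by the normalization, and as long as
`j_m` stays positive, `j_m'' = p j_m ≥ 0` keeps `j_m'` increasing, hence positive, hence `j_m`
increasing; so `j_m` has no first zero in `(0, r]`.
-/

open Filter Set

theorem forall_mem_Icc_pos_of_forall_Ico_pos {α : Type*} [ConditionallyCompleteLinearOrder α]
    [TopologicalSpace α] [OrderTopology α] {f : α → ℝ} {a b : α}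
    (hf : ContinuousOn f (Icc a b)) (ha : 0 < f a)
    (hstep : ∀ x ∈ Ioc a b, (∀ y ∈ Ico a x, 0 < f y) → 0 < f x) :
    ∀ x ∈ Icc a b, 0 < f x := by
  by_contra! ⟨x, hx, hfx⟩
  set Z := Icc a b ∩ f ⁻¹' Iic 0
  have hZne : Z.Nonempty := ⟨x, hx, hfx⟩
  have hZbdd : BddBelow Z := ⟨a, fun y hy => hy.1.1⟩
  have hZ : IsClosed Z := hf.preimage_isClosed_of_isClosed isClosed_Icc isClosed_Iic
  obtain ⟨⟨hat, htb⟩, hft⟩ : sInf Z ∈ Z := hZ.csInf_mem hZne hZbdd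
  have hat : a < sInf Z := hat.lt_of_ne fun h => (h ▸ ha).not_ge hft
  refine (hstep _ ⟨hat, htb⟩ fun y hy => ?_).not_ge hft
  by_contra! hfy
  exact hy.2.not_ge (csInf_le hZbdd ⟨⟨hy.1, hy.2.le.trans htb⟩, hfy⟩)

section SecondOrder

variable {f p : ℝ → ℝ} {U : Set ℝ} {a b : ℝ}

theorem deriv_pos_of_deriv_deriv_nonneg (hU : IsOpen U) (hf : ContDiffOn ℝ 2 f U)
    (hsub : Icc a b ⊆ U) (hf'' : ∀ x ∈ Ioo a b, 0 ≤ deriv (deriv f) x) (hf'a : 0 < deriv f a) :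
    ∀ x ∈ Icc a b, 0 < deriv f x := by
  have hf' : ContDiffOn ℝ 1 (deriv f) U := hf.deriv_of_isOpen hU (by norm_num)
  have hmono : MonotoneOn (deriv f) (Icc a b) := by
    refine monotoneOn_of_deriv_nonneg (convex_Icc a b) (hf'.continuousOn.mono hsub) ?_ ?_
    · rw [interior_Icc]
      exact (hf'.differentiableOn one_ne_zero).mono (Ioo_subset_Icc_self.trans hsub)
    · simpa only [interior_Icc] using hf''
  exact fun x hx => hf'a.trans_le (hmono (left_mem_Icc.2 (hx.1.trans hx.2)) hx hx.1)

theorem pos_and_deriv_pos_of_deriv_deriv_eq_mul (hU : IsOpen U) (hf : ContDiffOn ℝ 2 f U)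
    (hsub : Icc a b ⊆ U) (hode : ∀ x ∈ Ioo a b, deriv (deriv f) x = p x * f x)
    (hp : ∀ x ∈ Ioo a b, 0 ≤ p x) (hfa : 0 < f a) (hf'a : 0 < deriv f a) :
    ∀ x ∈ Icc a b, 0 < f x ∧ 0 < deriv f x := by
  have hderiv : ∀ c ∈ Icc a b, (∀ y ∈ Ioo a c, 0 ≤ f y) → ∀ x ∈ Icc a c, 0 < deriv f x :=
    fun c hc hfc =>
      deriv_pos_of_deriv_deriv_nonneg hU hf ((Icc_subset_Icc_right hc.2).trans hsub)
        (fun y hy => by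
          rw [hode y ⟨hy.1, hy.2.trans_le hc.2⟩]
          exact mul_nonneg (hp y ⟨hy.1, hy.2.trans_le hc.2⟩) (hfc y hy)) hf'a
  have hfpos : ∀ x ∈ Icc a b, 0 < f x := by
    refine forall_mem_Icc_pos_of_forall_Ico_pos (hf.continuousOn.mono hsub) hfa fun x hx hfx => ?_
    have hmono : StrictMonoOn f (Icc a x) := by
      refine strictMonoOn_of_deriv_pos (convex_Icc a x)
        (hf.continuousOn.mono ((Icc_subset_Icc_right hx.2).trans hsub)) fun y hy => ?_
      rw [interior_Icc] at hy
      exact hderiv x (Ioc_subset_Icc_self hx) (fun z hz => (hfx z (Ioo_subset_Ico_self hz)).le) y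
        (Ioo_subset_Icc_self hy)
    exact hfa.trans (hmono (left_mem_Icc.2 hx.1.le) (right_mem_Icc.2 hx.1.le) hx.1)
  exact fun x hx => ⟨hfpos x hx, hderiv b (right_mem_Icc.2 (hx.1.trans hx.2))
    (fun y hy => (hfpos y (Ioo_subset_Icc_self hy)).le) x hx⟩

end SecondOrder

theorem eventually_pos_of_tendsto_div {α : Type*} {f g : α → ℝ} {l : Filter α} {c : ℝ}
    (hc : 0 < c) (h : Tendsto (fun s => f s / g s) l (nhds c)) (hg : ∀ᶠ s in l, 0 < g s) :
    ∀ᶠ s in l, 0 < f s := by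
  filter_upwards [h.eventually (lt_mem_nhds hc), hg] with s hfg hgs
  exact (div_pos_iff_of_pos_right hgs).mp hfg

theorem le_div_sq_of_le {lam C r s μ : ℝ} (hlam : lam ≤ C) (hC : 0 ≤ C) (hs : 0 < s)
    (hsr : s ≤ r) (hμ : C * r ^ 2 ≤ μ) : lam ≤ μ / s ^ 2 := by
  rw [le_div_iff₀ (by positivity)]
  calc lam * s ^ 2 ≤ C * s ^ 2 := by gcongr
    _ ≤ C * r ^ 2 := by gcongr
    _ ≤ μ := hμ

theorem stmt7_general
    (q : ℝ → ℝ) (hq0 : ∀ r, 0 ≤ q r)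
    (j : ℤ → ℝ → ℝ → ℝ)
    (hjs : ∀ (m : ℤ) (lam : ℝ), ContDiffOn ℝ 2 (fun s => j m s lam) (Set.Ioi 0))
    (hode : ∀ (m : ℤ) (lam : ℝ), ∀ s ∈ Set.Ioi (0:ℝ),
      deriv (deriv (fun t => j m t lam)) s
        + (lam - q s - ((m:ℝ) ^ 2 - 1/4) / s ^ 2) * j m s lam = 0)
    (hnorm : ∀ (m : ℤ) (lam : ℝ),
      Tendsto (fun s : ℝ => j m s lam / s ^ ((|m| : ℝ) + 1/2))
        (nhdsWithin 0 (Set.Ioi 0)) (nhds 1))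
    (hnorm' : ∀ (m : ℤ) (lam : ℝ),
      Tendsto (fun s : ℝ => deriv (fun t => j m t lam) s /
          (((|m| : ℝ) + 1/2) * s ^ ((|m| : ℝ) - 1/2)))
        (nhdsWithin 0 (Set.Ioi 0)) (nhds 1))
    (r : ℝ) (hr : 0 < r)
    (Λ : Set ℝ) (hΛb : Bornology.IsBounded Λ) :
    ∃ M : ℕ, ∀ m : ℤ, (M : ℤ) ≤ |m| → ∀ lam ∈ Λ,
      0 < j m r lam ∧ 0 < deriv (fun t => j m t lam) r := by
  obtain ⟨C, hC⟩ := hΛb.bddAbove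
  obtain ⟨M, hM⟩ := exists_nat_ge (max C 0 * r ^ 2 + 1)
  refine ⟨M, fun m hm lam hlam => ?_⟩
  have hm2 : max C 0 * r ^ 2 ≤ (m : ℝ) ^ 2 - 1 / 4 := by
    have hmM : (M : ℝ) ≤ |(m : ℝ)| := by exact_mod_cast hm
    have : 0 ≤ max C 0 * r ^ 2 := by positivity
    nlinarith [sq_abs (m : ℝ)]
  obtain ⟨s₀, hjs₀, hj's₀, hs₀⟩ := ((eventually_pos_of_tendsto_div one_pos (hnorm m lam)
    (eventually_mem_nhdsWithin.mono fun s hs => Real.rpow_pos_of_pos hs _)).and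
    ((eventually_pos_of_tendsto_div one_pos (hnorm' m lam)
      (eventually_mem_nhdsWithin.mono fun s hs =>
        mul_pos (by positivity) (Real.rpow_pos_of_pos hs _))).and (Ioo_mem_nhdsGT hr))).exists
  have hs₀r : Icc s₀ r ⊆ Ioi 0 := fun s hs => hs₀.1.trans_le hs.1
  refine pos_and_deriv_pos_of_deriv_deriv_eq_mul
    (p := fun s => q s + ((m : ℝ) ^ 2 - 1 / 4) / s ^ 2 - lam) isOpen_Ioi (hjs m lam) hs₀r
    (fun s hs => ?_) (fun s hs => ?_) hjs₀ hj's₀ r (right_mem_Icc.2 hs₀.2.le)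
  · linarith [hode m lam s (hs₀r (Ioo_subset_Icc_self hs))]
  · have hlam_le := le_div_sq_of_le ((hC hlam).trans (le_max_left C 0)) (le_max_right C 0)
      (hs₀r (Ioo_subset_Icc_self hs)) hs.2.le hm2
    linarith [hq0 s]

/-- For fixed `r > 0` and a bounded set `Λ ⊆ [0,∞)`, if `|m|` is large enough then
`j_m(r,λ) > 0` and `j_m'(r,λ) > 0` for all `λ ∈ Λ` (Lemma 3.3 of the paper). -/
theorem stmt7
    (q : ℝ → ℝ) (hqm : Measurable q) (hq0 : ∀ r, 0 ≤ q r)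
    (hqbdd : BddAbove (q '' Set.Ici 0))
    (j : ℤ → ℝ → ℝ → ℝ)
    (hjs : ∀ (m : ℤ) (lam : ℝ), ContDiffOn ℝ 2 (fun s => j m s lam) (Set.Ioi 0))
    (hode : ∀ (m : ℤ) (lam : ℝ), ∀ s ∈ Set.Ioi (0:ℝ),
      deriv (deriv (fun t => j m t lam)) s
        + (lam - q s - ((m:ℝ) ^ 2 - 1/4) / s ^ 2) * j m s lam = 0)
    (hnorm : ∀ (m : ℤ) (lam : ℝ),
      Tendsto (fun s : ℝ => j m s lam / s ^ ((|m| : ℝ) + 1/2))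
        (nhdsWithin 0 (Set.Ioi 0)) (nhds 1))
    (hnorm' : ∀ (m : ℤ) (lam : ℝ),
      Tendsto (fun s : ℝ => deriv (fun t => j m t lam) s /
          (((|m| : ℝ) + 1/2) * s ^ ((|m| : ℝ) - 1/2)))
        (nhdsWithin 0 (Set.Ioi 0)) (nhds 1))
    (r : ℝ) (hr : 0 < r)
    (Λ : Set ℝ) (hΛ : Λ ⊆ Set.Ici 0) (hΛb : Bornology.IsBounded Λ) :
    ∃ M : ℕ, ∀ m : ℤ, (M : ℤ) ≤ |m| → ∀ lam ∈ Λ,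
      0 < j m r lam ∧ 0 < deriv (fun t => j m t lam) r :=
  stmt7_general q hq0 j hjs hode hnorm hnorm' r hr Λ hΛb
end

section
/- Writing σ_m(r,λ) = j_m(r,λ) r^{-(m+1/2)} for m ≥ 0, there exist constants C, D depending only on the bounded set Λ ⊂ [0,∞) and q_∞ such that |1 - σ_m(r,λ)| ≤ C/(2m+2) and |σ_m'(r,λ)| ≤ D/(2m+2) for all λ ∈ Λ. -/
/-!
With `ν = m + 1/2` and `V = q - λ` the equation reads `w'' = (V + ν(ν-1)/s²) w`, whose
free solution is `s^ν`. The Wronskian `W = s^ν w' - ν s^(ν-1) w` of `s^ν` and `w` tends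
to `0` at `0`, and `W' = s^(2ν) V σ`, `σ' = s^(-2ν) W` for `σ = w s^(-ν)`. So if `|V| ≤ B`
and `|σ| ≤ K` on `(0, y]`, then `|σ'(s)| ≤ B K s / (2ν+1)` and
`|σ(s) - 1| ≤ B K s² / (2(2ν+1))` there. As `2ν + 1 ≥ 2`, these increment bounds let the
maximum of `|σ|` at most double across each of `n ≥ B r²` equal pieces of `(0, r]`; hence
`|σ| ≤ 2^n` uniformly in `m`, and `K = 2^n` in the two bounds above gives the estimates,
with the factor `1/(2ν+1) = 1/(2m+2)`.
-/

open Filter Set Topology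

theorem abs_sub_le_sub_of_abs_deriv_le {f f' g g' : ℝ → ℝ} {a b : ℝ} (hab : a ≤ b)
    (hf : ∀ x ∈ Icc a b, HasDerivAt f (f' x) x) (hg : ∀ x ∈ Icc a b, HasDerivAt g (g' x) x)
    (hle : ∀ x ∈ Icc a b, |f' x| ≤ g' x) : |f b - f a| ≤ g b - g a := by
  have := image_norm_le_of_norm_deriv_right_le_deriv_boundary' (f := fun x => f x - f a)
    (B := fun x => g x - g a) (fun x hx => ((hf x hx).continuousAt.continuousWithinAt.sub_const _))
    (fun x hx => ((hf x (Ico_subset_Icc_self hx)).sub_const _).hasDerivWithinAt)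
    (by simp) (fun x hx => ((hg x hx).continuousAt.continuousWithinAt.sub_const _))
    (fun x hx => ((hg x (Ico_subset_Icc_self hx)).sub_const _).hasDerivWithinAt)
    (fun x hx => hle x (Ico_subset_Icc_self hx)) (right_mem_Icc.2 hab)
  simpa using this

theorem abs_sub_le_of_abs_deriv_le_of_tendsto {f f' g g' : ℝ → ℝ} {L t : ℝ} (ht : 0 < t)
    (hf : ∀ x ∈ Ioc 0 t, HasDerivAt f (f' x) x) (hg : ∀ x ∈ Ioc 0 t, HasDerivAt g (g' x) x)
    (hle : ∀ x ∈ Ioc 0 t, |f' x| ≤ g' x)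
    (hfL : Tendsto f (𝓝[>] 0) (𝓝 L)) (hg0 : Tendsto g (𝓝[>] 0) (𝓝 0)) :
    |f t - L| ≤ g t := by
  refine le_of_tendsto_of_tendsto (((tendsto_const_nhds (x := f t)).sub hfL).abs)
    (by simpa using (tendsto_const_nhds (x := g t)).sub hg0) ?_
  filter_upwards [Ioo_mem_nhdsGT ht] with a ha
  have hsub : Icc a t ⊆ Ioc 0 t := Icc_subset_Ioc_iff ha.2.le |>.2 ⟨ha.1, le_rfl⟩
  exact abs_sub_le_sub_of_abs_deriv_le ha.2.le (fun x hx => hf x (hsub hx))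
    (fun x hx => hg x (hsub hx)) (fun x hx => hle x (hsub hx))

theorem abs_le_two_pow_of_abs_sub_le {f : ℝ → ℝ} {c r : ℝ} {n : ℕ} (hn : 0 < n)
    (hc : 0 ≤ c) (hcn : 4 * c * r ^ 2 ≤ n) (hf : ContinuousOn f (Icc 0 r)) (hf0 : f 0 = 1)
    (hinc : ∀ y ≤ r, ∀ K, (∀ u ∈ Icc 0 y, |f u| ≤ K) →
      ∀ x s, 0 ≤ x → x ≤ s → s ≤ y → |f s - f x| ≤ c * K * (s ^ 2 - x ^ 2)) :
    ∀ s ∈ Icc 0 r, |f s| ≤ 2 ^ n := by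
  intro s hs
  have hr : 0 ≤ r := hs.1.trans hs.2
  have hn' : (0 : ℝ) < n := by exact_mod_cast hn
  set Δ := r / n with hΔ
  have hΔ0 : 0 ≤ Δ := by positivity
  have hnΔ : n * Δ = r := by rw [hΔ]; field_simp
  have hcΔ : 4 * c * r * Δ ≤ 1 := by
    rw [hΔ, mul_div_assoc', div_le_one hn']; linarith [sq r]
  suffices key : ∀ i ≤ n, ∀ s ∈ Icc 0 (i * Δ), |f s| ≤ 2 ^ i by
    exact key n le_rfl s (by rwa [hnΔ])
  intro i
  induction i with
  | zero =>
    intro _ s hs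
    obtain rfl : s = 0 := by simpa using hs
    simp [hf0]
  | succ i ih =>
    intro hi s hs
    have hyr : (i + 1 : ℕ) * Δ ≤ r := by
      rw [← hnΔ]; gcongr
    -- compare a maximiser `u` of `|f|` on the longer interval with the nearest point `x` of the
    -- shorter one: `u² - x² ≤ 2 r Δ` is small enough to absorb the increment
    obtain ⟨u, hu, hmax⟩ := isCompact_Icc.exists_isMaxOn (nonempty_Icc.2 (by positivity))
      ((hf.mono (Icc_subset_Icc_right hyr)).abs)
    set x := min (i * Δ) u
    have hx : x ∈ Icc 0 (i * Δ) := ⟨le_min (by positivity) hu.1, min_le_left _ _⟩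
    have hux : u - x ≤ Δ := by
      have := hu.2; push_cast at this
      rcases min_cases (i * Δ) u with h | h <;> simp only [x, h.1] <;> linarith
    have hsq : u ^ 2 - x ^ 2 ≤ Δ * (2 * r) := by
      rw [show u ^ 2 - x ^ 2 = (u - x) * (u + x) by ring]
      exact mul_le_mul hux (by linarith [min_le_right (i * Δ) u, hu.2])
        (by linarith [hx.1, hu.1]) hΔ0
    have hincr : c * |f u| * (u ^ 2 - x ^ 2) ≤ |f u| / 2 := by
      nlinarith [mul_le_mul_of_nonneg_left hsq (mul_nonneg hc (abs_nonneg (f u))),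
        abs_nonneg (f u)]
    have hfu : |f u| ≤ 2 ^ i + |f u| / 2 := by
      linarith [abs_sub_abs_le_abs_sub (f u) (f x), ih (by omega) x hx,
        hinc _ hyr _ (fun v hv => hmax hv) x u hx.1 (min_le_right _ _) hu.2]
    calc |f s| ≤ |f u| := hmax hs
      _ ≤ 2 ^ (i + 1) := by rw [pow_succ]; linarith

noncomputable def wronskianRpow (ν : ℝ) (w : ℝ → ℝ) (s : ℝ) : ℝ :=
  s ^ ν * deriv w s - ν * s ^ (ν - 1) * w s

noncomputable def divRpow (ν : ℝ) (w : ℝ → ℝ) (s : ℝ) : ℝ := w s * s ^ (-ν)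

structure IsNormalizedSolution (V : ℝ → ℝ) (ν : ℝ) (w : ℝ → ℝ) : Prop where
  contDiffOn : ContDiffOn ℝ 2 w (Ioi 0)
  deriv_deriv : ∀ s ∈ Ioi (0 : ℝ), deriv (deriv w) s = (V s + ν * (ν - 1) / s ^ 2) * w s
  tendsto_div_rpow : Tendsto (fun s => w s / s ^ ν) (𝓝[>] 0) (𝓝 1)
  tendsto_deriv_div : Tendsto (fun s => deriv w s / (ν * s ^ (ν - 1))) (𝓝[>] 0) (𝓝 1)

namespace IsNormalizedSolution

variable {V w : ℝ → ℝ} {ν B K y : ℝ}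

theorem hasDerivAt (h : IsNormalizedSolution V ν w) {s : ℝ} (hs : 0 < s) :
    HasDerivAt w (deriv w s) s :=
  ((h.contDiffOn.differentiableOn (by norm_num)).differentiableAt
    (isOpen_Ioi.mem_nhds hs)).hasDerivAt

theorem hasDerivAt_deriv (h : IsNormalizedSolution V ν w) {s : ℝ} (hs : 0 < s) :
    HasDerivAt (deriv w) (deriv (deriv w) s) s :=
  (((h.contDiffOn.deriv_of_isOpen (m := 1) isOpen_Ioi (by norm_num)).differentiableOn
    one_ne_zero).differentiableAt (isOpen_Ioi.mem_nhds hs)).hasDerivAt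

theorem hasDerivAt_wronskianRpow (h : IsNormalizedSolution V ν w) {s : ℝ} (hs : 0 < s) :
    HasDerivAt (wronskianRpow ν w) (s ^ (2 * ν) * (V s * divRpow ν w s)) s := by
  have hpow : ∀ p, HasDerivAt (fun t : ℝ => t ^ p) (p * s ^ (p - 1)) s :=
    fun p => Real.hasDerivAt_rpow_const (Or.inl hs.ne')
  refine (((hpow ν).mul (h.hasDerivAt_deriv hs)).sub
    (((hpow (ν - 1)).const_mul ν).mul (h.hasDerivAt hs))).congr_deriv ?_
  rw [h.deriv_deriv s hs, divRpow, show 2 * ν = ν + ν by ring]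
  simp only [Real.rpow_sub_one hs.ne', Real.rpow_neg hs.le, Real.rpow_add hs]
  have := (Real.rpow_pos_of_pos hs ν).ne'
  field_simp
  ring

theorem hasDerivAt_divRpow (h : IsNormalizedSolution V ν w) {s : ℝ} (hs : 0 < s) :
    HasDerivAt (divRpow ν w) (s ^ (-(2 * ν)) * wronskianRpow ν w s) s := by
  refine ((h.hasDerivAt hs).mul
    (Real.hasDerivAt_rpow_const (p := -ν) (Or.inl hs.ne'))).congr_deriv ?_
  rw [wronskianRpow, show 2 * ν = ν + ν by ring]
  simp only [Real.rpow_sub_one hs.ne', Real.rpow_neg hs.le, Real.rpow_add hs]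
  have := (Real.rpow_pos_of_pos hs ν).ne'
  field_simp
  ring

theorem tendsto_divRpow (h : IsNormalizedSolution V ν w) :
    Tendsto (divRpow ν w) (𝓝[>] 0) (𝓝 1) := by
  refine h.tendsto_div_rpow.congr' ?_
  filter_upwards [self_mem_nhdsWithin] with s hs
  rw [divRpow, Real.rpow_neg (le_of_lt hs), div_eq_mul_inv]

theorem tendsto_wronskianRpow (h : IsNormalizedSolution V ν w) (hν : 1 / 2 ≤ ν) :
    Tendsto (wronskianRpow ν w) (𝓝[>] 0) (𝓝 0) := by
  have hdiff :
      Tendsto (fun s => deriv w s / (ν * s ^ (ν - 1)) - w s / s ^ ν) (𝓝[>] 0) (𝓝 0) := by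
    simpa using h.tendsto_deriv_div.sub h.tendsto_div_rpow
  have hbdd : IsBoundedUnder (· ≤ ·) (𝓝[>] 0) fun s : ℝ => ‖ν * s ^ (2 * ν - 1)‖ := by
    refine isBoundedUnder_of_eventually_le (a := ν) ?_
    filter_upwards [Ioo_mem_nhdsGT one_pos] with s hs
    rw [norm_mul, Real.norm_of_nonneg (by linarith),
      Real.norm_of_nonneg (Real.rpow_pos_of_pos hs.1 _).le]
    exact mul_le_of_le_one_right (by linarith) (Real.rpow_le_one hs.1.le hs.2.le (by linarith))
  -- `W = ν s^(2ν-1) (w' / (ν s^(ν-1)) - w / s^ν)`: a bounded factor times a null one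
  refine (hdiff.zero_mul_isBoundedUnder_le hbdd).congr' ?_
  filter_upwards [self_mem_nhdsWithin] with s (hs : 0 < s)
  rw [wronskianRpow, show 2 * ν = ν + ν by ring]
  simp only [Real.rpow_sub_one hs.ne', Real.rpow_add hs]
  have := (Real.rpow_pos_of_pos hs ν).ne'
  have := hs.ne'
  have : ν ≠ 0 := by linarith
  field_simp

theorem abs_wronskianRpow_le (h : IsNormalizedSolution V ν w) (hν : 1 / 2 ≤ ν)
    (hV : ∀ s ∈ Ioc 0 y, |V s| ≤ B) (hK : ∀ s ∈ Ioc 0 y, |divRpow ν w s| ≤ K) {t : ℝ}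
    (ht : t ∈ Ioc 0 y) : |wronskianRpow ν w t| ≤ B * K * t ^ (2 * ν + 1) / (2 * ν + 1) := by
  have hν' : 0 < 2 * ν + 1 := by linarith
  have hg0 : Tendsto (fun s : ℝ => B * K * s ^ (2 * ν + 1) / (2 * ν + 1)) (𝓝[>] 0) (𝓝 0) := by
    have := (((Real.continuousAt_rpow_const 0 (2 * ν + 1) (Or.inr hν'.le)).const_mul
      (B * K)).div_const (2 * ν + 1)).tendsto.mono_left (nhdsWithin_le_nhds (s := Ioi 0))
    simpa [Real.zero_rpow hν'.ne'] using this
  have key := abs_sub_le_of_abs_deriv_le_of_tendsto (g' := fun s => B * K * s ^ (2 * ν)) ht.1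
    (fun s hs => h.hasDerivAt_wronskianRpow hs.1)
    (fun s hs => by
      refine (((Real.hasDerivAt_rpow_const (p := 2 * ν + 1) (Or.inl hs.1.ne')).const_mul
        (B * K)).div_const (2 * ν + 1)).congr_deriv ?_
      rw [add_sub_cancel_right]
      field_simp)
    (fun s hs => by
      have hs' : s ∈ Ioc 0 y := ⟨hs.1, hs.2.trans ht.2⟩
      rw [abs_mul, abs_mul, abs_of_pos (Real.rpow_pos_of_pos hs.1 _), mul_comm (B * K)]
      exact mul_le_mul_of_nonneg_left (mul_le_mul (hV s hs') (hK s hs') (abs_nonneg _)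
        ((abs_nonneg _).trans (hV s hs'))) (Real.rpow_pos_of_pos hs.1 _).le)
    (h.tendsto_wronskianRpow hν) hg0
  simpa using key

theorem abs_deriv_divRpow_le (h : IsNormalizedSolution V ν w) (hν : 1 / 2 ≤ ν)
    (hV : ∀ s ∈ Ioc 0 y, |V s| ≤ B) (hK : ∀ s ∈ Ioc 0 y, |divRpow ν w s| ≤ K) {t : ℝ}
    (ht : t ∈ Ioc 0 y) : |deriv (divRpow ν w) t| ≤ B * K * t / (2 * ν + 1) := by
  have hpos := Real.rpow_pos_of_pos ht.1 (-(2 * ν))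
  rw [(h.hasDerivAt_divRpow ht.1).deriv, abs_mul, abs_of_pos hpos]
  calc t ^ (-(2 * ν)) * |wronskianRpow ν w t|
      ≤ t ^ (-(2 * ν)) * (B * K * t ^ (2 * ν + 1) / (2 * ν + 1)) :=
        mul_le_mul_of_nonneg_left (h.abs_wronskianRpow_le hν hV hK ht) hpos.le
    _ = B * K * t / (2 * ν + 1) := by
        rw [Real.rpow_add_one ht.1.ne', Real.rpow_neg ht.1.le]
        have := (Real.rpow_pos_of_pos ht.1 (2 * ν)).ne'
        field_simp

theorem abs_divRpow_sub_le (h : IsNormalizedSolution V ν w) (hν : 1 / 2 ≤ ν)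
    (hV : ∀ s ∈ Ioc 0 y, |V s| ≤ B) (hK : ∀ s ∈ Ioc 0 y, |divRpow ν w s| ≤ K) {x s : ℝ}
    (hx : 0 < x) (hxs : x ≤ s) (hsy : s ≤ y) :
    |divRpow ν w s - divRpow ν w x| ≤ B * K * (s ^ 2 - x ^ 2) / (2 * (2 * ν + 1)) := by
  have key := abs_sub_le_sub_of_abs_deriv_le hxs
    (g := fun u => B * K * u ^ 2 / (2 * (2 * ν + 1))) (g' := fun u => B * K * u / (2 * ν + 1))
    (fun u hu => (h.hasDerivAt_divRpow (hx.trans_le hu.1)).differentiableAt.hasDerivAt)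
    (fun u _ => by
      refine (((hasDerivAt_pow 2 u).const_mul (B * K)).div_const _).congr_deriv ?_
      field_simp
      ring)
    (fun u hu => h.abs_deriv_divRpow_le hν hV hK ⟨hx.trans_le hu.1, hu.2.trans hsy⟩)
  exact key.trans_eq (by ring)

theorem abs_divRpow_sub_one_le (h : IsNormalizedSolution V ν w) (hν : 1 / 2 ≤ ν)
    (hV : ∀ s ∈ Ioc 0 y, |V s| ≤ B) (hK : ∀ s ∈ Ioc 0 y, |divRpow ν w s| ≤ K) {s : ℝ}
    (hs : s ∈ Ioc 0 y) : |divRpow ν w s - 1| ≤ B * K * s ^ 2 / (2 * (2 * ν + 1)) := by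
  have hg0 : Tendsto (fun u : ℝ => B * K * u ^ 2 / (2 * (2 * ν + 1))) (𝓝[>] 0) (𝓝 0) := by
    have := ((continuous_pow 2).const_mul (B * K)).div_const (2 * (2 * ν + 1)) |>.tendsto 0
    simpa using this.mono_left (nhdsWithin_le_nhds (s := Ioi 0))
  exact abs_sub_le_of_abs_deriv_le_of_tendsto hs.1
    (fun u hu => (h.hasDerivAt_divRpow hu.1).differentiableAt.hasDerivAt)
    (fun u _ => by
      refine (((hasDerivAt_pow 2 u).const_mul (B * K)).div_const _).congr_deriv ?_
      field_simp
      ring)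
    (fun u hu => h.abs_deriv_divRpow_le hν hV hK ⟨hu.1, hu.2.trans hs.2⟩)
    h.tendsto_divRpow hg0

theorem continuousOn_update_divRpow (h : IsNormalizedSolution V ν w) (r : ℝ) :
    ContinuousOn (Function.update (divRpow ν w) 0 1) (Icc 0 r) := by
  rw [continuousOn_update_iff, Icc_sdiff_left]
  exact ⟨fun s hs => (h.hasDerivAt_divRpow hs.1).continuousAt.continuousWithinAt,
    fun _ => h.tendsto_divRpow.mono_left (nhdsWithin_mono _ Ioc_subset_Ioi_self)⟩

theorem abs_divRpow_le_two_pow (h : IsNormalizedSolution V ν w) (hν : 1 / 2 ≤ ν) {r : ℝ}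
    (hV : ∀ s ∈ Ioc 0 r, |V s| ≤ B) {n : ℕ} (hn : 0 < n) (hBn : B * r ^ 2 ≤ n) :
    ∀ s ∈ Ioc 0 r, |divRpow ν w s| ≤ 2 ^ n := by
  intro s hs
  have hB : 0 ≤ B := (abs_nonneg _).trans (hV s hs)
  -- extending `σ` by its limit `σ 0 = 1` makes `0` a base point like any other
  have hf : ∀ u, 0 < u → Function.update (divRpow ν w) 0 1 u = divRpow ν w u :=
    fun u hu => Function.update_of_ne hu.ne' _ _
  have hcn : 4 * (B / (2 * (2 * ν + 1))) * r ^ 2 ≤ n := by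
    calc 4 * (B / (2 * (2 * ν + 1))) * r ^ 2 = B * r ^ 2 * (2 / (2 * ν + 1)) := by
          field_simp; ring
      _ ≤ B * r ^ 2 * 1 := by gcongr; rw [div_le_one (by linarith)]; linarith
      _ ≤ n := by linarith
  have key := abs_le_two_pow_of_abs_sub_le hn (by positivity) hcn
    (h.continuousOn_update_divRpow r) (Function.update_self ..) ?_ s
    (Ioc_subset_Icc_self hs)
  · rwa [hf s hs.1] at key
  intro y hy K hK x t hx hxt hty
  have hK' : ∀ u ∈ Ioc 0 y, |divRpow ν w u| ≤ K := fun u hu => by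
    simpa [hf u hu.1] using hK u (Ioc_subset_Icc_self hu)
  have hV' : ∀ u ∈ Ioc 0 y, |V u| ≤ B := fun u hu => hV u ⟨hu.1, hu.2.trans hy⟩
  rcases hx.eq_or_lt with rfl | hx
  · rcases hxt.eq_or_lt with rfl | ht
    · simp
    rw [hf t ht, Function.update_self]
    exact (h.abs_divRpow_sub_one_le hν hV' hK' ⟨ht, hty⟩).trans_eq (by ring)
  · rw [hf t (hx.trans_le hxt), hf x hx]
    exact (h.abs_divRpow_sub_le hν hV' hK' hx hxt hty).trans_eq (by ring)

end IsNormalizedSolution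

theorem isNormalizedSolution_of_radial_ode {Q w : ℝ → ℝ} {lam : ℝ} {m : ℕ}
    (hw : ContDiffOn ℝ 2 w (Ioi 0))
    (hode : ∀ s ∈ Ioi (0 : ℝ),
      deriv (deriv w) s + (lam - Q s - (((m : ℤ) : ℝ) ^ 2 - 1 / 4) / s ^ 2) * w s = 0)
    (hnorm : Tendsto (fun s : ℝ => w s / s ^ ((|((m : ℤ) : ℝ)| : ℝ) + 1 / 2)) (𝓝[>] 0) (𝓝 1))
    (hnorm' : Tendsto (fun s : ℝ => deriv w s /
      ((|((m : ℤ) : ℝ)| + 1 / 2) * s ^ (|((m : ℤ) : ℝ)| - 1 / 2))) (𝓝[>] 0) (𝓝 1)) :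
    IsNormalizedSolution (fun s => Q s - lam) (m + 1 / 2) w := by
  simp only [Int.cast_natCast, Nat.abs_cast] at hode hnorm hnorm'
  refine ⟨hw, fun s hs => by linear_combination hode s hs, hnorm, ?_⟩
  rwa [show (m : ℝ) + 1 / 2 - 1 = m - 1 / 2 by ring]

theorem stmt8_general
    (q : ℝ → ℝ) (hq0 : ∀ r, 0 ≤ q r)
    (qinf : ℝ) (hqinf : qinf = sSup (q '' Set.Ici 0))
    (hqbdd : BddAbove (q '' Set.Ici 0))
    (j : ℤ → ℝ → ℝ → ℝ)
    (hjs : ∀ (m : ℤ) (lam : ℝ), ContDiffOn ℝ 2 (fun s => j m s lam) (Set.Ioi 0))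
    (hode : ∀ (m : ℤ) (lam : ℝ), ∀ s ∈ Set.Ioi (0:ℝ),
      deriv (deriv (fun t => j m t lam)) s
        + (lam - q s - ((m:ℝ) ^ 2 - 1/4) / s ^ 2) * j m s lam = 0)
    (hnorm : ∀ (m : ℤ) (lam : ℝ),
      Tendsto (fun s : ℝ => j m s lam / s ^ ((|m| : ℝ) + 1/2))
        (nhdsWithin 0 (Set.Ioi 0)) (nhds 1))
    (hnorm' : ∀ (m : ℤ) (lam : ℝ),
      Tendsto (fun s : ℝ => deriv (fun t => j m t lam) s /
          (((|m| : ℝ) + 1/2) * s ^ ((|m| : ℝ) - 1/2)))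
        (nhdsWithin 0 (Set.Ioi 0)) (nhds 1))
    (r : ℝ) (hr : 0 < r)
    (Λ : Set ℝ) (hΛb : Bornology.IsBounded Λ)
    (σ : ℕ → ℝ → ℝ → ℝ)
    (hσ : ∀ (m : ℕ) (s : ℝ) (lam : ℝ), σ m s lam = j m s lam * s ^ (-((m:ℝ) + 1/2))) :
    ∃ C D : ℝ, ∀ m : ℕ, ∀ lam ∈ Λ,
      |1 - σ m r lam| ≤ C / (2 * (m:ℝ) + 2) ∧
      |deriv (fun s => σ m s lam) r| ≤ D / (2 * (m:ℝ) + 2) := by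
  obtain ⟨R, hR⟩ := isBounded_iff_forall_norm_le.1 hΛb
  have hq_le : ∀ s, 0 ≤ s → q s ≤ qinf := fun s hs => hqinf ▸ le_csSup hqbdd ⟨s, hs, rfl⟩
  set B := qinf + R
  set n := ⌈B * r ^ 2⌉₊ + 1
  refine ⟨B * 2 ^ n * r ^ 2 / 2, B * 2 ^ n * r, fun m lam hlam => ?_⟩
  have hsol := isNormalizedSolution_of_radial_ode (hjs m lam) (hode m lam) (hnorm m lam)
    (hnorm' m lam)
  have hν : 1 / 2 ≤ (m : ℝ) + 1 / 2 := by linarith [m.cast_nonneg (α := ℝ)]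
  have hqinf0 : 0 ≤ qinf := (hq0 0).trans (hq_le 0 le_rfl)
  have hlam : |lam| ≤ R := Real.norm_eq_abs lam ▸ hR lam hlam
  have hV : ∀ s ∈ Ioc 0 r, |q s - lam| ≤ B := fun s hs =>
    abs_le.2 ⟨by linarith [hq0 s, le_abs_self lam], by linarith [hq_le s hs.1.le, neg_abs_le lam]⟩
  have hK := hsol.abs_divRpow_le_two_pow (n := n) hν hV (by positivity)
    (by push_cast [n]; linarith [Nat.le_ceil (B * r ^ 2)])
  have hr' : r ∈ Ioc 0 r := ⟨hr, le_rfl⟩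
  have h2ν : 2 * ((m : ℝ) + 1 / 2) + 1 = 2 * m + 2 := by ring
  have hσ' : (fun s => σ m s lam) = divRpow (m + 1 / 2) (fun s => j m s lam) :=
    funext (hσ m · lam)
  constructor
  · rw [abs_sub_comm, hσ]
    exact (hsol.abs_divRpow_sub_one_le hν hV hK hr').trans_eq (by rw [h2ν, div_div])
  · rw [hσ', ← h2ν]
    exact hsol.abs_deriv_divRpow_le hν hV hK hr'

/-- Uniform estimates `|1 - σ_m(r,λ)| ≤ C/(2m+2)` and `|σ_m'(r,λ)| ≤ D/(2m+2)` for
`σ_m(r,λ) = j_m(r,λ) r^{-(m+1/2)}`, with constants depending only on `Λ` and `q_∞`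
(proof of Lemma 3.3 of the paper). -/
theorem stmt8
    (q : ℝ → ℝ) (hqm : Measurable q) (hq0 : ∀ r, 0 ≤ q r)
    (qinf : ℝ) (hqinf : qinf = sSup (q '' Set.Ici 0))
    (hqbdd : BddAbove (q '' Set.Ici 0))
    (j : ℤ → ℝ → ℝ → ℝ)
    (hjs : ∀ (m : ℤ) (lam : ℝ), ContDiffOn ℝ 2 (fun s => j m s lam) (Set.Ioi 0))
    (hode : ∀ (m : ℤ) (lam : ℝ), ∀ s ∈ Set.Ioi (0:ℝ),
      deriv (deriv (fun t => j m t lam)) s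
        + (lam - q s - ((m:ℝ) ^ 2 - 1/4) / s ^ 2) * j m s lam = 0)
    (hnorm : ∀ (m : ℤ) (lam : ℝ),
      Tendsto (fun s : ℝ => j m s lam / s ^ ((|m| : ℝ) + 1/2))
        (nhdsWithin 0 (Set.Ioi 0)) (nhds 1))
    (hnorm' : ∀ (m : ℤ) (lam : ℝ),
      Tendsto (fun s : ℝ => deriv (fun t => j m t lam) s /
          (((|m| : ℝ) + 1/2) * s ^ ((|m| : ℝ) - 1/2)))
        (nhdsWithin 0 (Set.Ioi 0)) (nhds 1))
    (r : ℝ) (hr : 0 < r)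
    (Λ : Set ℝ) (hΛ : Λ ⊆ Set.Ici 0) (hΛb : Bornology.IsBounded Λ)
    (σ : ℕ → ℝ → ℝ → ℝ)
    (hσ : ∀ (m : ℕ) (s : ℝ) (lam : ℝ), σ m s lam = j m s lam * s ^ (-((m:ℝ) + 1/2))) :
    ∃ C D : ℝ, ∀ m : ℕ, ∀ lam ∈ Λ,
      |1 - σ m r lam| ≤ C / (2 * (m:ℝ) + 2) ∧
      |deriv (fun s => σ m s lam) r| ≤ D / (2 * (m:ℝ) + 2) :=
  stmt8_general q hq0 qinf hqinf hqbdd j hjs hode hnorm hnorm' r hr Λ hΛb σ hσ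
end

section
/- If g₁, g₂ are meromorphic functions on ℂ, not both identically zero, and (t_n) is a sequence of nonzero complex numbers with t_n → 0 such that g₁(t_n) + g₂(t_n) ln t_n = 0 for all n, then a contradiction arises; consequently no such sequence of zeros accumulating at 0 exists unless g₁ ≡ g₂ ≡ 0. -/
/-!
Near `0`, `‖log z‖ ≥ |log ‖z‖|` tends to infinity while `z ^ k * log z → 0` for every `k ≥ 1`.
A function `h` meromorphic at `0` of order `m` either has a finite limit there (`m ≥ 0`) or
`z ^ (-m) * h z` has a nonzero limit (`m < 0`); either way `h` cannot agree with `log` on a set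
accumulating at `0`. If `g₂ ≢ 0` this applies to `h = -g₁ / g₂`; if `g₂ ≡ 0`, then `g₁` vanishes on
the sequence and hence near `0` by the isolated zeros principle.
-/

open Filter Topology

namespace Complex

lemma abs_log_norm_le_norm_log (z : ℂ) : |Real.log ‖z‖| ≤ ‖log z‖ := by
  simpa only [log_re] using abs_re_le_norm (log z)

lemma norm_log_le_abs_log_norm_add_pi (z : ℂ) : ‖log z‖ ≤ |Real.log ‖z‖| + Real.pi := by
  calc ‖log z‖ ≤ |(log z).re| + |(log z).im| := norm_le_abs_re_add_abs_im _
    _ ≤ |Real.log ‖z‖| + Real.pi := by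
      rw [log_re, log_im]
      exact add_le_add_right (abs_arg_le_pi z) _

lemma tendsto_norm_log_nhdsNE_zero : Tendsto (fun z ↦ ‖log z‖) (𝓝[≠] 0) atTop :=
  tendsto_atTop_mono abs_log_norm_le_norm_log <|
    tendsto_abs_atBot_atTop.comp (Real.tendsto_log_nhdsGT_zero.comp tendsto_norm_nhdsNE_zero)

lemma tendsto_pow_mul_log_nhdsNE_zero {k : ℕ} (hk : k ≠ 0) :
    Tendsto (fun z ↦ z ^ k * log z) (𝓝[≠] 0) (𝓝 0) := by
  have hnorm := tendsto_norm_nhdsNE_zero (E := ℂ)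
  have hlog : Tendsto (fun z : ℂ ↦ |Real.log ‖z‖| * ‖z‖ ^ k) (𝓝[≠] 0) (𝓝 0) := by
    simpa using ((tendsto_log_mul_rpow_nhdsGT_zero (r := k) (by positivity)).comp hnorm).abs
  have hpi : Tendsto (fun z : ℂ ↦ ‖z‖ ^ k * Real.pi) (𝓝[≠] 0) (𝓝 0) := by
    simpa [hk] using ((continuous_norm.tendsto (0 : ℂ)).mono_left nhdsWithin_le_nhds).pow k
      |>.mul_const Real.pi
  refine squeeze_zero_norm (fun z ↦ ?_) (by simpa using hlog.add hpi)
  calc ‖z ^ k * log z‖ = ‖z‖ ^ k * ‖log z‖ := by rw [norm_mul, norm_pow]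
    _ ≤ ‖z‖ ^ k * (|Real.log ‖z‖| + Real.pi) := by gcongr; exact norm_log_le_abs_log_norm_add_pi z
    _ = |Real.log ‖z‖| * ‖z‖ ^ k + ‖z‖ ^ k * Real.pi := by ring

lemma not_frequently_log_eq_of_meromorphicAt {h : ℂ → ℂ} (hh : MeromorphicAt h 0) :
    ¬ ∃ᶠ z in 𝓝[≠] 0, log z = h z := by
  intro hfreq
  rcases le_or_gt 0 (meromorphicOrderAt h 0) with ho | ho
  · obtain ⟨c, hc⟩ := tendsto_nhds_of_meromorphicOrderAt_nonneg hh ho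
    have hlarge := tendsto_norm_log_nhdsNE_zero.eventually_gt_atTop (‖c‖ + 1)
    have hsmall := hc.norm.eventually (gt_mem_nhds (lt_add_one ‖c‖))
    obtain ⟨z, hz, hlz, hhz⟩ := (hfreq.and_eventually (hlarge.and hsmall)).exists
    rw [hz] at hlz
    exact hlz.not_gt hhz
  · obtain ⟨m, hm⟩ := WithTop.ne_top_iff_exists.mp ho.ne_top
    have hm0 : m < 0 := by exact_mod_cast hm ▸ ho
    obtain ⟨k, rfl⟩ := Int.exists_eq_neg_ofNat hm0.le
    have hk : k ≠ 0 := by omega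
    have hord : meromorphicOrderAt (fun z ↦ z ^ k * h z) 0 = 0 := by
      have hpow : meromorphicOrderAt (fun z : ℂ ↦ z ^ k) 0 = k := by
        simpa using fun_meromorphicOrderAt_pow_id_sub_const (x := (0 : ℂ)) (n := k)
      rw [fun_meromorphicOrderAt_mul (by fun_prop) hh, ← hm, hpow]
      norm_cast
      simp
    obtain ⟨c, hc0, hc⟩ := tendsto_ne_zero_of_meromorphicOrderAt_eq_zero (by fun_prop) hord
    refine hc0 (tendsto_nhds_unique_of_frequently_eq hc (tendsto_pow_mul_log_nhdsNE_zero hk) ?_)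
    exact hfreq.mono fun z hz ↦ by rw [hz]

end Complex

open Complex in
/-- If `g₁, g₂` are meromorphic on `ℂ` and not both identically zero (near `0`), then
there is no sequence `t_n → 0` of nonzero points with `g₁(t_n) + g₂(t_n) log t_n = 0`
(argument from the proof of Lemma 6.2 of the paper). -/
theorem stmt13
    (g1 g2 : ℂ → ℂ)
    (hg1 : MeromorphicOn g1 Set.univ) (hg2 : MeromorphicOn g2 Set.univ)
    (hnz : ¬ (g1 =ᶠ[nhdsWithin 0 {(0:ℂ)}ᶜ] 0 ∧ g2 =ᶠ[nhdsWithin 0 {(0:ℂ)}ᶜ] 0))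
    (t : ℕ → ℂ) (ht0 : ∀ n, t n ≠ 0)
    (htl : Tendsto t atTop (nhds 0))
    (heq : ∀ n, g1 (t n) + g2 (t n) * Complex.log (t n) = 0) :
    False := by
  have ht : Tendsto t atTop (𝓝[≠] 0) := tendsto_nhdsWithin_iff.2 ⟨htl, .of_forall ht0⟩
  have hfreq : ∃ᶠ z in 𝓝[≠] 0, g1 z + g2 z * log z = 0 := ht.frequently (.of_forall heq)
  rcases (hg2 0 trivial).eventually_eq_zero_or_eventually_ne_zero with hg2z | hg2ne
  · refine hnz ⟨(hg1 0 trivial).frequently_zero_iff_eventuallyEq_zero.1 ?_, hg2z⟩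
    exact (hfreq.and_eventually hg2z).mono fun z ⟨hz, hz2⟩ ↦ by simpa [hz2] using hz
  · refine not_frequently_log_eq_of_meromorphicAt ((hg1 0 trivial).neg.div (hg2 0 trivial)) ?_
    refine (hfreq.and_eventually hg2ne).mono fun z ⟨hz, hz2⟩ ↦ ?_
    simp only [Pi.div_apply, Pi.neg_apply]
    field_simp
    linear_combination hz
end

section
/- For |m| ≥ 1 and λ ≤ d², the function k_m(r,λ) = √r K_m(√(d²-λ) r) satisfies k_m'(r,λ) < 0 for all r > 0; consequently the equation j_m'(R,λ)/j_m(R,λ) = k_m'(R,λ)/k_m(R,λ) has no solution when j_m'(R,λ)/j_m(R,λ) > 0. -/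
/-!
Since `k'' = V k` with `V = d² - λ + (m² - 1/4)/r² > 0` and `k > 0`, the derivative `k'` is
strictly increasing on `(0, ∞)`; as it is negative near infinity, it is negative everywhere.
Then `k'/k < 0` at `R`, so it cannot equal a positive ratio `j'/j`.
-/

open Filter Set

theorem StrictMonoOn.lt_of_eventually_lt {g : ℝ → ℝ} {a c : ℝ} (hg : StrictMonoOn g (Ioi a))
    (hc : ∀ᶠ x in atTop, g x < c) : ∀ x ∈ Ioi a, g x < c := by
  intro x hx
  obtain ⟨y, hyc, hxy⟩ := (hc.and (eventually_gt_atTop x)).exists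
  exact (hg hx (mem_Ioi.2 (lt_trans hx hxy)) hxy).trans hyc

theorem strictMonoOn_deriv_of_deriv_deriv_pos {f : ℝ → ℝ} {s : Set ℝ} (hs : IsOpen s)
    (hconv : Convex ℝ s) (hf : ContDiffOn ℝ 2 f s) (hf'' : ∀ x ∈ s, 0 < deriv (deriv f) x) :
    StrictMonoOn (deriv f) s :=
  strictMonoOn_of_deriv_pos hconv (hf.continuousOn_deriv_of_isOpen hs (by norm_num))
    (fun x hx => hf'' x (interior_subset hx))

theorem stmt17_general
    (m : ℤ) (hm : 1 ≤ |m|) (d lam R : ℝ) (hR : 0 < R) (hlam : lam ≤ d ^ 2)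
    (km : ℝ → ℝ) (hks : ContDiffOn ℝ 2 km (Set.Ioi 0))
    (hkode : ∀ r ∈ Set.Ioi (0:ℝ),
      deriv (deriv km) r = (d ^ 2 - lam + ((m:ℝ) ^ 2 - 1/4) / r ^ 2) * km r)
    (hkpos : ∀ r ∈ Set.Ioi (0:ℝ), 0 < km r)
    (hk' : ∀ᶠ r in atTop, deriv km r < 0) :
    (∀ r ∈ Set.Ioi (0:ℝ), deriv km r < 0) ∧
    ∀ jv jdv : ℝ, 0 < jdv / jv → jdv / jv ≠ deriv km R / km R := by
  have hm2 : (1:ℝ) ≤ (m:ℝ) ^ 2 := by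
    rw [← sq_abs]
    exact one_le_pow₀ (by exact_mod_cast hm)
  have hkconvex : ∀ r ∈ Ioi (0:ℝ), 0 < deriv (deriv km) r := by
    intro r hr
    have hpot : 0 < d ^ 2 - lam + ((m:ℝ) ^ 2 - 1/4) / r ^ 2 := by
      have : 0 < ((m:ℝ) ^ 2 - 1/4) / r ^ 2 := div_pos (by linarith) (pow_pos hr 2)
      linarith
    rw [hkode r hr]
    exact mul_pos hpot (hkpos r hr)
  have hneg : ∀ r ∈ Ioi (0:ℝ), deriv km r < 0 :=
    (strictMonoOn_deriv_of_deriv_deriv_pos isOpen_Ioi (convex_Ioi 0) hks hkconvex).lt_of_eventually_lt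
      hk'
  refine ⟨hneg, fun jv jdv hj heq => ?_⟩
  have : deriv km R / km R < 0 := div_neg_of_neg_of_pos (hneg R hR) (hkpos R hR)
  linarith

/-- For `|m| ≥ 1` and `λ ≤ d²` the function `k_m(r,λ) = √r K_m(√(d²-λ) r)` satisfies
`k_m'(r,λ) < 0` for all `r > 0`; hence `j_m'(R,λ)/j_m(R,λ) = k_m'(R,λ)/k_m(R,λ)` is
impossible when the left-hand side is positive (proof of Theorem 8.3 of the paper). -/
theorem stmt17
    (m : ℤ) (hm : 1 ≤ |m|) (d lam R : ℝ) (hd : 0 < d) (hR : 0 < R) (hlam : lam ≤ d ^ 2)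
    (km : ℝ → ℝ) (hks : ContDiffOn ℝ 2 km (Set.Ioi 0))
    (hkode : ∀ r ∈ Set.Ioi (0:ℝ),
      deriv (deriv km) r = (d ^ 2 - lam + ((m:ℝ) ^ 2 - 1/4) / r ^ 2) * km r)
    (hkpos : ∀ r ∈ Set.Ioi (0:ℝ), 0 < km r)
    (hk' : ∀ᶠ r in atTop, deriv km r < 0) :
    (∀ r ∈ Set.Ioi (0:ℝ), deriv km r < 0) ∧
    ∀ jv jdv : ℝ, 0 < jdv / jv → jdv / jv ≠ deriv km R / km R :=
  stmt17_general m hm d lam R hR hlam km hks hkode hkpos hk'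
end

section
/- The total number of guided modes, i.e., the total number over all m ∈ ℤ of real λ ∈ (0, d²] for which either (λ < d² and j_m'(R,λ)/j_m(R,λ) = k_m'(R,λ)/k_m(R,λ)) or (λ = d² and j_m'(R,λ)/j_m(R,λ) = -(|m|-1/2)/R), is finite. -/
/-! Each `m` carries only finitely many guided modes, and for `|m|` large there are none at all:
there `j_m'(R)/j_m(R) > 0`, whereas both matching conditions ask this ratio to equal a negative
number, `k_m'(R)/k_m(R)` (as `k_m > 0 > k_m'`) or `-(|m| - 1/2)/R`. -/

open Filter

theorem Set.Finite.of_finite_image_fst_of_finite_fibers {α β : Type*} {s : Set (α × β)}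
    (hfst : (Prod.fst '' s).Finite) (hfibers : ∀ a, {b | (a, b) ∈ s}.Finite) : s.Finite :=
  Set.Finite.of_finite_fibers Prod.fst hfst fun a _ =>
    ((Set.finite_singleton a).prod (hfibers a)).subset <| by
      rintro ⟨x, y⟩ ⟨hxy, rfl⟩
      exact ⟨rfl, hxy⟩

def IsGuidedMode (j k : ℤ → ℝ → ℝ → ℝ) (d R : ℝ) (m : ℤ) (lam : ℝ) : Prop :=
  lam ∈ Set.Ioc 0 (d ^ 2) ∧
    ((lam < d ^ 2 ∧ deriv (fun t => j m t lam) R / j m R lam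
        = deriv (fun t => k m t lam) R / k m R lam) ∨
     (lam = d ^ 2 ∧ deriv (fun t => j m t lam) R / j m R lam
        = -((|m| : ℝ) - 1/2) / R))

section GuidedMode

variable {j k : ℤ → ℝ → ℝ → ℝ} {d R : ℝ} {m : ℤ} {lam : ℝ}

theorem IsGuidedMode.deriv_div_neg (h : IsGuidedMode j k d R m lam) (hR : 0 < R) (hm : 1 ≤ |m|)
    (hk : deriv (fun t => k m t lam) R < 0 ∧ 0 < k m R lam) :
    deriv (fun t => j m t lam) R / j m R lam < 0 := by
  rcases h.2 with ⟨-, heq⟩ | ⟨-, heq⟩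
  · exact heq ▸ div_neg_of_neg_of_pos hk.1 hk.2
  · have hm' : (1 : ℝ) ≤ |(m : ℝ)| := by rw [← Int.cast_abs]; exact_mod_cast hm
    exact heq ▸ div_neg_of_neg_of_pos (by linarith) hR

theorem exists_abs_lt_of_isGuidedMode (hR : 0 < R)
    (hlarge : ∃ M : ℕ, ∀ m : ℤ, (M : ℤ) ≤ |m| → ∀ lam ∈ Set.Ioc (0:ℝ) (d ^ 2),
      0 < j m R lam ∧ 0 < deriv (fun t => j m t lam) R)
    (hk : ∀ m : ℤ, 1 ≤ |m| → ∀ lam ∈ Set.Ioc (0:ℝ) (d ^ 2),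
      deriv (fun t => k m t lam) R < 0 ∧ 0 < k m R lam) :
    ∃ N : ℤ, ∀ m lam, IsGuidedMode j k d R m lam → |m| < N := by
  obtain ⟨M, hM⟩ := hlarge
  refine ⟨max M 1, fun m lam h => ?_⟩
  by_contra! hNm
  obtain ⟨hj, hj'⟩ := hM m ((le_max_left _ _).trans hNm) lam h.1
  have hm : 1 ≤ |m| := (le_max_right _ _).trans hNm
  exact (div_pos hj' hj).not_gt (h.deriv_div_neg hR hm (hk m hm lam h.1))

end GuidedMode

theorem stmt18_general
    (d R : ℝ) (hR : 0 < R)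
    (j : ℤ → ℝ → ℝ → ℝ) (k : ℤ → ℝ → ℝ → ℝ)
    (hfin : ∀ m : ℤ,
      {lam : ℝ | lam ∈ Set.Ioc 0 (d ^ 2) ∧
        ((lam < d ^ 2 ∧ deriv (fun t => j m t lam) R / j m R lam
            = deriv (fun t => k m t lam) R / k m R lam) ∨
         (lam = d ^ 2 ∧ deriv (fun t => j m t lam) R / j m R lam
            = -((|m| : ℝ) - 1/2) / R))}.Finite)
    (hlarge : ∃ M : ℕ, ∀ m : ℤ, (M : ℤ) ≤ |m| → ∀ lam ∈ Set.Ioc (0:ℝ) (d ^ 2),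
      0 < j m R lam ∧ 0 < deriv (fun t => j m t lam) R)
    (hk' : ∀ m : ℤ, 1 ≤ |m| → ∀ lam ∈ Set.Ioc (0:ℝ) (d ^ 2), ∀ r ∈ Set.Ioi (0:ℝ),
      deriv (fun t => k m t lam) r < 0 ∧ 0 < k m r lam) :
    {p : ℤ × ℝ | p.2 ∈ Set.Ioc 0 (d ^ 2) ∧
      ((p.2 < d ^ 2 ∧ deriv (fun t => j p.1 t p.2) R / j p.1 R p.2
          = deriv (fun t => k p.1 t p.2) R / k p.1 R p.2) ∨
       (p.2 = d ^ 2 ∧ deriv (fun t => j p.1 t p.2) R / j p.1 R p.2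
          = -((|p.1| : ℝ) - 1/2) / R))}.Finite := by
  obtain ⟨N, hN⟩ := exists_abs_lt_of_isGuidedMode hR hlarge
    fun m hm lam hlam => hk' m hm lam hlam R hR
  refine Set.Finite.of_finite_image_fst_of_finite_fibers ?_ hfin
  refine (Set.finite_Ioo (-N) N).subset ?_
  rintro _ ⟨⟨m, lam⟩, h, rfl⟩
  exact abs_lt.mp (hN m lam h)

/-- Theorem 8.3 of the paper: the total number of guided modes, over all `m ∈ ℤ`, is
finite. -/
theorem stmt18
    (q : ℝ → ℝ) (hqm : Measurable q) (hq0 : ∀ r, 0 ≤ q r)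
    (hqbdd : BddAbove (q '' Set.Ici 0))
    (d R : ℝ) (hd : 0 < d) (hR : 0 < R) (hqcl : ∀ r, R ≤ r → q r = d ^ 2)
    (j : ℤ → ℝ → ℝ → ℝ) (k : ℤ → ℝ → ℝ → ℝ)
    (hjs : ∀ (m : ℤ) (lam : ℝ), ContDiffOn ℝ 2 (fun s => j m s lam) (Set.Ioi 0))
    (hjode : ∀ (m : ℤ) (lam : ℝ), ∀ s ∈ Set.Ioi (0:ℝ),
      deriv (deriv (fun t => j m t lam)) s
        + (lam - q s - ((m:ℝ) ^ 2 - 1/4) / s ^ 2) * j m s lam = 0)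
    (hjn : ∀ (m : ℤ) (lam : ℝ),
      Tendsto (fun s : ℝ => j m s lam / s ^ ((|m| : ℝ) + 1/2))
        (nhdsWithin 0 (Set.Ioi 0)) (nhds 1))
    (hfin : ∀ m : ℤ,
      {lam : ℝ | lam ∈ Set.Ioc 0 (d ^ 2) ∧
        ((lam < d ^ 2 ∧ deriv (fun t => j m t lam) R / j m R lam
            = deriv (fun t => k m t lam) R / k m R lam) ∨
         (lam = d ^ 2 ∧ deriv (fun t => j m t lam) R / j m R lam
            = -((|m| : ℝ) - 1/2) / R))}.Finite)
    (hlarge : ∃ M : ℕ, ∀ m : ℤ, (M : ℤ) ≤ |m| → ∀ lam ∈ Set.Ioc (0:ℝ) (d ^ 2),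
      0 < j m R lam ∧ 0 < deriv (fun t => j m t lam) R)
    (hk' : ∀ m : ℤ, 1 ≤ |m| → ∀ lam ∈ Set.Ioc (0:ℝ) (d ^ 2), ∀ r ∈ Set.Ioi (0:ℝ),
      deriv (fun t => k m t lam) r < 0 ∧ 0 < k m r lam) :
    {p : ℤ × ℝ | p.2 ∈ Set.Ioc 0 (d ^ 2) ∧
      ((p.2 < d ^ 2 ∧ deriv (fun t => j p.1 t p.2) R / j p.1 R p.2
          = deriv (fun t => k p.1 t p.2) R / k p.1 R p.2) ∨
       (p.2 = d ^ 2 ∧ deriv (fun t => j p.1 t p.2) R / j p.1 R p.2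
          = -((|p.1| : ℝ) - 1/2) / R))}.Finite :=
  stmt18_general d R hR j k hfin hlarge hk'
end
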